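/- arXiv:1903.00917 — 4 statements merged into one kernel-verified Lean document; each statement's English description precedes it below -/
import Mathlib

section
/- The quadratic functions C₃ and C₄ Poisson-commute with respect to the Lie–Poisson bracket on ℝ⁶: {C₃, C₄} = 0 identically on ℝ⁶. -/
/-!
Write `C₃ = ∑ (Kₐ² + aₐ pₐ²)` and `C₄ = ∑ (jₐ Kₐ² + bₐ pₐ²)`. Since `∇_K C₃ = 2K`, the term
`⟨K, ∇_K C₃ × ∇_K C₄⟩` vanishes, and what remains is a cubic whose coefficient of `Kₐ pₐ₊₁ pₐ₊₂`
is `(bₐ₊₁ − bₐ₊₂) − jₐ (aₐ₊₁ − aₐ₊₂)`, indices mod 3. Both parts equal `jₐ (jₐ₊₂ − jₐ₊₁)` once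
`j₁j₂j₃ / jₐ` is recognised as the product of the other two `j`'s.
-/

open Matrix

/-- The gradient of `F : ℝ³ × ℝ³ → ℝ` with respect to the `K`-variables. -/
noncomputable def gradK (F : (Fin 3 → ℝ) → (Fin 3 → ℝ) → ℝ) (K p : Fin 3 → ℝ) : Fin 3 → ℝ :=
  fun i => deriv (fun t => F (Function.update K i t) p) (K i)

/-- The gradient of `F : ℝ³ × ℝ³ → ℝ` with respect to the `p`-variables. -/
noncomputable def gradP (F : (Fin 3 → ℝ) → (Fin 3 → ℝ) → ℝ) (K p : Fin 3 → ℝ) : Fin 3 → ℝ :=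
  fun i => deriv (fun t => F K (Function.update p i t)) (p i)

/-- The Lie–Poisson bracket on `𝔰𝔢(3)* ≅ ℝ³ × ℝ³ ≅ ℝ⁶`:
`{F,G}(K,p) = ⟨K, ∇_K F × ∇_K G⟩ + ⟨p, ∇_K F × ∇_p G − ∇_K G × ∇_p F⟩`. -/
noncomputable def liePoisson (F G : (Fin 3 → ℝ) → (Fin 3 → ℝ) → ℝ)
    (K p : Fin 3 → ℝ) : ℝ :=
  K ⬝ᵥ (crossProduct (gradK F K p) (gradK G K p)) +
    p ⬝ᵥ (crossProduct (gradK F K p) (gradP G K p)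
          - crossProduct (gradK G K p) (gradP F K p))

section WeightedSqSum

variable {ι : Type*} [Fintype ι] [DecidableEq ι]

def weightedSqSum (c x : ι → ℝ) : ℝ :=
  ∑ k, c k * x k ^ 2

theorem weightedSqSum_update (c x : ι → ℝ) (i : ι) (t : ℝ) :
    weightedSqSum c (Function.update x i t) = weightedSqSum c x + c i * (t ^ 2 - x i ^ 2) := by
  have hterm : ∀ k, c k * Function.update x i t k ^ 2
      = c k * x k ^ 2 + if k = i then c i * (t ^ 2 - x i ^ 2) else 0 := by
    intro k
    by_cases hk : k = i
    · subst hk; simp only [Function.update_self, if_true]; ring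
    · simp [hk]
  simp only [weightedSqSum, hterm, Finset.sum_add_distrib, Finset.sum_ite_eq', Finset.mem_univ,
    if_true]

theorem deriv_weightedSqSum_update (c x : ι → ℝ) (i : ι) :
    deriv (fun t => weightedSqSum c (Function.update x i t)) (x i) = 2 * c i * x i := by
  simp only [weightedSqSum_update]
  have h : HasDerivAt (fun t => weightedSqSum c x + c i * (t ^ 2 - x i ^ 2))
      (c i * (2 * x i)) (x i) := by
    simpa using (((hasDerivAt_pow 2 (x i)).sub_const (x i ^ 2)).const_mul (c i)).const_add
      (weightedSqSum c x)
  rw [h.deriv]; ring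

end WeightedSqSum

def diagQuadratic (c d : Fin 3 → ℝ) (K p : Fin 3 → ℝ) : ℝ :=
  weightedSqSum c K + weightedSqSum d p

theorem gradK_diagQuadratic (c d K p : Fin 3 → ℝ) :
    gradK (diagQuadratic c d) K p = fun i => 2 * c i * K i := by
  funext i
  simp only [gradK, diagQuadratic, deriv_add_const, deriv_weightedSqSum_update]

theorem gradP_diagQuadratic (c d K p : Fin 3 → ℝ) :
    gradP (diagQuadratic c d) K p = fun i => 2 * d i * p i := by
  funext i
  simp only [gradP, diagQuadratic, deriv_const_add, deriv_weightedSqSum_update]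

theorem liePoisson_diagQuadratic (a j b K p : Fin 3 → ℝ) :
    liePoisson (diagQuadratic 1 a) (diagQuadratic j b) K p =
      4 * ∑ i, (b (i + 1) - b (i + 2) - j i * (a (i + 1) - a (i + 2))) *
        K i * p (i + 1) * p (i + 2) := by
  simp only [liePoisson, gradK_diagQuadratic, gradP_diagQuadratic, cross_apply, dotProduct,
    Fin.sum_univ_three, Pi.one_apply, Pi.sub_apply]
  simp only [Fin.isValue, mul_one, cons_val_zero, cons_val_one, cons_val, Fin.reduceAdd]
  ring

theorem liePoisson_diagQuadratic_eq_zero {a j b : Fin 3 → ℝ}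
    (h : ∀ i, b (i + 1) - b (i + 2) = j i * (a (i + 1) - a (i + 2))) (K p : Fin 3 → ℝ) :
    liePoisson (diagQuadratic 1 a) (diagQuadratic j b) K p = 0 := by
  simp [liePoisson_diagQuadratic, h]

/-- The quadratic first integrals `C₃` and `C₄` of Clebsch top Poisson commute:
`{C₃, C₄} = 0` identically on `ℝ⁶`. -/
theorem liePoisson_C₃_C₄_eq_zero (j₁ j₂ j₃ : ℝ)
    (hj₁ : j₁ ≠ 0) (hj₂ : j₂ ≠ 0) (hj₃ : j₃ ≠ 0) :
    ∀ K p : Fin 3 → ℝ,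
      liePoisson
        (fun K p =>
          (K 0 ^ 2 + (j₁ + j₂ + j₃ - j₁) * p 0 ^ 2)
          + (K 1 ^ 2 + (j₁ + j₂ + j₃ - j₂) * p 1 ^ 2)
          + (K 2 ^ 2 + (j₁ + j₂ + j₃ - j₃) * p 2 ^ 2))
        (fun K p =>
          (j₁ * K 0 ^ 2 + (j₁ * j₂ * j₃ / j₁) * p 0 ^ 2)
          + (j₂ * K 1 ^ 2 + (j₁ * j₂ * j₃ / j₂) * p 1 ^ 2)
          + (j₃ * K 2 ^ 2 + (j₁ * j₂ * j₃ / j₃) * p 2 ^ 2))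
        K p = 0 := by
  intro K p
  convert liePoisson_diagQuadratic_eq_zero (j := ![j₁, j₂, j₃])
    (a := fun i => j₁ + j₂ + j₃ - ![j₁, j₂, j₃] i)
    (b := fun i => j₁ * j₂ * j₃ / ![j₁, j₂, j₃] i) ?_ K p using 2
  · funext x y
    simp [diagQuadratic, weightedSqSum, Fin.sum_univ_three]
    ring
  · funext x y
    simp [diagQuadratic, weightedSqSum, Fin.sum_univ_three]
    ring
  · intro i
    fin_cases i <;> simp <;> field_simp <;> ring
end

section
/- Let I₁, I₂, I₃ be nonzero real numbers that are not all equal, and let m₁, m₂, m₃ be nonzero real numbers. Then (I₂−I₃)/m₁ + (I₃−I₁)/m₂ + (I₁−I₂)/m₃ = 0 holds if and only if there exist ν, ν′ ∈ ℝ such that 1/m_α = ν + ν′ I_α/(I₁I₂I₃) for all α = 1, 2, 3. -/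
lemma clebsch_aux (I₁ I₂ I₃ a b c : ℝ)
    (hI₁ : I₁ ≠ 0) (hI₂ : I₂ ≠ 0) (hI₃ : I₃ ≠ 0)
    (h12 : I₁ ≠ I₂)
    (h : (I₂ - I₃) * a + (I₃ - I₁) * b + (I₁ - I₂) * c = 0) :
    ∃ ν ν' : ℝ,
      a = ν + ν' * I₁ / (I₁ * I₂ * I₃) ∧
      b = ν + ν' * I₂ / (I₁ * I₂ * I₃) ∧
      c = ν + ν' * I₃ / (I₁ * I₂ * I₃) := by
  have hP : I₁ * I₂ * I₃ ≠ 0 := by positivity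
  have hd : I₁ - I₂ ≠ 0 := sub_ne_zero.mpr h12
  refine ⟨a - (I₁*I₂*I₃*(a - b)/(I₁-I₂)) * I₁ / (I₁*I₂*I₃),
    I₁*I₂*I₃*(a - b)/(I₁-I₂), by ring, ?_, ?_⟩
  · field_simp
    ring
  · field_simp
    linear_combination h

/-- Equivalence of the second and third forms of the Clebsch condition:
for nonzero `I₁, I₂, I₃` not all equal and nonzero `m₁, m₂, m₃`,
`(I₂−I₃)/m₁ + (I₃−I₁)/m₂ + (I₁−I₂)/m₃ = 0` iff there exist `ν, ν′`
with `1/m_α = ν + ν′ I_α/(I₁I₂I₃)` for `α = 1, 2, 3`. -/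
theorem clebsch_condition_iff_exists (I₁ I₂ I₃ m₁ m₂ m₃ : ℝ)
    (hI₁ : I₁ ≠ 0) (hI₂ : I₂ ≠ 0) (hI₃ : I₃ ≠ 0)
    (hne : ¬(I₁ = I₂ ∧ I₂ = I₃))
    (hm₁ : m₁ ≠ 0) (hm₂ : m₂ ≠ 0) (hm₃ : m₃ ≠ 0) :
    (I₂ - I₃) / m₁ + (I₃ - I₁) / m₂ + (I₁ - I₂) / m₃ = 0 ↔
      ∃ ν ν' : ℝ,
        1 / m₁ = ν + ν' * I₁ / (I₁ * I₂ * I₃) ∧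
        1 / m₂ = ν + ν' * I₂ / (I₁ * I₂ * I₃) ∧
        1 / m₃ = ν + ν' * I₃ / (I₁ * I₂ * I₃) := by
  constructor
  · intro h
    have h' : (I₂ - I₃) * (1/m₁) + (I₃ - I₁) * (1/m₂) + (I₁ - I₂) * (1/m₃) = 0 := by
      rw [← h]; ring
    by_cases h12 : I₁ = I₂
    · have h23 : I₂ ≠ I₃ := fun he => hne ⟨h12, he⟩
      obtain ⟨ν, ν', e2, e3, e1⟩ := clebsch_aux I₂ I₃ I₁ (1/m₂) (1/m₃) (1/m₁)
        hI₂ hI₃ hI₁ h23 (by linear_combination h')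
      exact ⟨ν, ν', by rw [e1]; ring_nf, by rw [e2]; ring_nf, by rw [e3]; ring_nf⟩
    · obtain ⟨ν, ν', e1, e2, e3⟩ := clebsch_aux I₁ I₂ I₃ (1/m₁) (1/m₂) (1/m₃)
        hI₁ hI₂ hI₃ h12 h'
      exact ⟨ν, ν', e1, e2, e3⟩
  · rintro ⟨ν, ν', h1, h2, h3⟩
    have g : (I₂-I₃)*(1/m₁) + (I₃-I₁)*(1/m₂) + (I₁-I₂)*(1/m₃) = 0 := by
      rw [h1, h2, h3]
      field_simp
      ring
    linear_combination g
end

section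
/- Let j₁, j₂, j₃ be pairwise distinct and nonzero, and let p₁, p₂, p₃ satisfy p₁² + p₂² + p₃² = 1. Let x₁, x₂ be the two roots (with multiplicity) of x² − Ex + F = 0, where E = Σ_{α=1}^{3} (j₁+j₂+j₃−j_α)p_α² and F = Σ_{α=1}^{3} (j₁j₂j₃/j_α)p_α². Then p₁² = (j₁−x₁)(j₁−x₂)/((j₁−j₂)(j₁−j₃)), p₂² = (j₂−x₁)(j₂−x₂)/((j₂−j₃)(j₂−j₁)), and p₃² = (j₃−x₁)(j₃−x₂)/((j₃−j₁)(j₃−j₂)). -/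
/-- Expression of the squared momenta `p_α²` in terms of the supplementary coordinates
`(x₁, x₂)`, the roots of `x² − Ex + F = 0` with
`E = Σ (j₁+j₂+j₃−j_α)p_α²` and `F = Σ (j₁j₂j₃/j_α)p_α²`, given `p₁²+p₂²+p₃² = 1`. -/
theorem squared_momenta_in_supplementary_coordinates
    (j₁ j₂ j₃ p₁ p₂ p₃ x₁ x₂ : ℝ)
    (hj₁ : j₁ ≠ 0) (hj₂ : j₂ ≠ 0) (hj₃ : j₃ ≠ 0)
    (h₁₂ : j₁ ≠ j₂) (h₂₃ : j₂ ≠ j₃) (h₃₁ : j₃ ≠ j₁)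
    (hp : p₁ ^ 2 + p₂ ^ 2 + p₃ ^ 2 = 1)
    (hroots : ∀ x : ℝ,
      x ^ 2
        - ((j₁ + j₂ + j₃ - j₁) * p₁ ^ 2 + (j₁ + j₂ + j₃ - j₂) * p₂ ^ 2
            + (j₁ + j₂ + j₃ - j₃) * p₃ ^ 2) * x
        + ((j₁ * j₂ * j₃ / j₁) * p₁ ^ 2 + (j₁ * j₂ * j₃ / j₂) * p₂ ^ 2
            + (j₁ * j₂ * j₃ / j₃) * p₃ ^ 2)
      = (x - x₁) * (x - x₂)) :
    p₁ ^ 2 = (j₁ - x₁) * (j₁ - x₂) / ((j₁ - j₂) * (j₁ - j₃)) ∧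
    p₂ ^ 2 = (j₂ - x₁) * (j₂ - x₂) / ((j₂ - j₃) * (j₂ - j₁)) ∧
    p₃ ^ 2 = (j₃ - x₁) * (j₃ - x₂) / ((j₃ - j₁) * (j₃ - j₂)) := by
  have e1 : j₁ * j₂ * j₃ / j₁ = j₂ * j₃ := by field_simp
  have e2 : j₁ * j₂ * j₃ / j₂ = j₁ * j₃ := by field_simp
  have e3 : j₁ * j₂ * j₃ / j₃ = j₁ * j₂ := by field_simp
  have h1 := hroots j₁
  have h2 := hroots j₂
  have h3 := hroots j₃
  rw [e1, e2, e3] at h1 h2 h3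
  have d12 : j₁ - j₂ ≠ 0 := sub_ne_zero.mpr h₁₂
  have d13 : j₁ - j₃ ≠ 0 := sub_ne_zero.mpr (fun h => h₃₁ h.symm)
  have d23 : j₂ - j₃ ≠ 0 := sub_ne_zero.mpr h₂₃
  have d21 : j₂ - j₁ ≠ 0 := sub_ne_zero.mpr (fun h => h₁₂ h.symm)
  have d31 : j₃ - j₁ ≠ 0 := sub_ne_zero.mpr h₃₁
  have d32 : j₃ - j₂ ≠ 0 := sub_ne_zero.mpr (fun h => h₂₃ h.symm)
  refine ⟨?_, ?_, ?_⟩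
  · field_simp
    nlinarith [h1, hp, sq_nonneg p₁]
  · field_simp
    nlinarith [h2, hp]
  · field_simp
    nlinarith [h3, hp]
end

section
/- Let σ ≠ 0 and σ′ be scalars, let δ₁, δ₂, δ₃ be scalars with (j₁−σ′)(j₂−σ′)(j₃−σ′) = σ², where j_α = σδ_α + σ′ for α = 1,2,3 (so that δ₁δ₂δ₃ = 1/σ), and assume j₁, j₂, j₃ are nonzero. Suppose (K,p) satisfies p_α = δ_α K_α for α = 1,2,3, together with C₁ = Σ δ_α K_α² = 0 and C₂ = Σ δ_α²K_α² = 1. Then C₃(K,p) = Σ [K_α² + (j_β+j_γ)δ_α²K_α²] = 2σ′ and C₄(K,p) = Σ [j_α K_α² + j_β j_γ δ_α² K_α²] = (σ′)², where for each α, {α,β,γ} = {1,2,3}. In particular, C₃² − 4C₄ = 0, so the quadratic x² − C₃x + C₄ = 0 has a double root (j₄ = j₅). -/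
/-!
Write `e₂ = δ₁δ₂ + δ₂δ₃ + δ₃δ₁`. The constraint `(j₁−σ′)(j₂−σ′)(j₃−σ′) = σ²` says
`σ³δ₁δ₂δ₃ = σ²`, i.e. `σδ₁δ₂δ₃ = 1`. Using this to replace `σδ_α δ_β δ_γ` by `1`,
both `C₃` and `C₄` become linear combinations of `C₁ = Σ δ_α K_α²` and `C₂ = Σ δ_α² K_α²`:
`C₃ = σe₂ C₁ + 2σ′ C₂` and `C₄ = (2σ + σσ′e₂) C₁ + σ′² C₂`.
-/

section ClebschInvariantSubspace

variable {R : Type*} [CommRing R] {σ σ' δ₁ δ₂ δ₃ j₁ j₂ j₃ : R}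

theorem mul_prod_eq_one_of_prod_sub_eq_sq [IsDomain R] (hσ : σ ≠ 0)
    (hj₁ : j₁ = σ * δ₁ + σ') (hj₂ : j₂ = σ * δ₂ + σ') (hj₃ : j₃ = σ * δ₃ + σ')
    (h : (j₁ - σ') * (j₂ - σ') * (j₃ - σ') = σ ^ 2) :
    σ * (δ₁ * δ₂ * δ₃) = 1 := by
  subst hj₁ hj₂ hj₃
  refine mul_left_cancel₀ (pow_ne_zero 2 hσ) ?_
  linear_combination h

variable (K₁ K₂ K₃ : R)

theorem clebschC₃_eq_of_invariant
    (hj₁ : j₁ = σ * δ₁ + σ') (hj₂ : j₂ = σ * δ₂ + σ') (hj₃ : j₃ = σ * δ₃ + σ') :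
    (K₁ ^ 2 + (j₂ + j₃) * δ₁ ^ 2 * K₁ ^ 2)
        + (K₂ ^ 2 + (j₃ + j₁) * δ₂ ^ 2 * K₂ ^ 2)
        + (K₃ ^ 2 + (j₁ + j₂) * δ₃ ^ 2 * K₃ ^ 2)
      = σ * (δ₁ * δ₂ + δ₂ * δ₃ + δ₃ * δ₁) * (δ₁ * K₁ ^ 2 + δ₂ * K₂ ^ 2 + δ₃ * K₃ ^ 2)
        + 2 * σ' * (δ₁ ^ 2 * K₁ ^ 2 + δ₂ ^ 2 * K₂ ^ 2 + δ₃ ^ 2 * K₃ ^ 2)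
        + (1 - σ * (δ₁ * δ₂ * δ₃)) * (K₁ ^ 2 + K₂ ^ 2 + K₃ ^ 2) := by
  subst hj₁ hj₂ hj₃
  ring

theorem clebschC₄_eq_of_invariant
    (hj₁ : j₁ = σ * δ₁ + σ') (hj₂ : j₂ = σ * δ₂ + σ') (hj₃ : j₃ = σ * δ₃ + σ') :
    (j₁ * K₁ ^ 2 + j₂ * j₃ * δ₁ ^ 2 * K₁ ^ 2)
        + (j₂ * K₂ ^ 2 + j₃ * j₁ * δ₂ ^ 2 * K₂ ^ 2)
        + (j₃ * K₃ ^ 2 + j₁ * j₂ * δ₃ ^ 2 * K₃ ^ 2)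
      = (2 * σ + σ' * σ * (δ₁ * δ₂ + δ₂ * δ₃ + δ₃ * δ₁))
          * (δ₁ * K₁ ^ 2 + δ₂ * K₂ ^ 2 + δ₃ * K₃ ^ 2)
        + σ' ^ 2 * (δ₁ ^ 2 * K₁ ^ 2 + δ₂ ^ 2 * K₂ ^ 2 + δ₃ ^ 2 * K₃ ^ 2)
        + (1 - σ * (δ₁ * δ₂ * δ₃))
          * (σ' * (K₁ ^ 2 + K₂ ^ 2 + K₃ ^ 2) - σ * (δ₁ * K₁ ^ 2 + δ₂ * K₂ ^ 2 + δ₃ * K₃ ^ 2)) := by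
  subst hj₁ hj₂ hj₃
  ring

end ClebschInvariantSubspace

theorem special_solution_double_root_general (σ σ' δ₁ δ₂ δ₃ j₁ j₂ j₃ K₁ K₂ K₃ : ℝ)
    (hσ : σ ≠ 0)
    (hj₁ : j₁ = σ * δ₁ + σ') (hj₂ : j₂ = σ * δ₂ + σ') (hj₃ : j₃ = σ * δ₃ + σ')
    (hσsq : (j₁ - σ') * (j₂ - σ') * (j₃ - σ') = σ ^ 2)
    (hC₁ : δ₁ * K₁ ^ 2 + δ₂ * K₂ ^ 2 + δ₃ * K₃ ^ 2 = 0)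
    (hC₂ : δ₁ ^ 2 * K₁ ^ 2 + δ₂ ^ 2 * K₂ ^ 2 + δ₃ ^ 2 * K₃ ^ 2 = 1) :
    ((K₁ ^ 2 + (j₂ + j₃) * δ₁ ^ 2 * K₁ ^ 2)
        + (K₂ ^ 2 + (j₃ + j₁) * δ₂ ^ 2 * K₂ ^ 2)
        + (K₃ ^ 2 + (j₁ + j₂) * δ₃ ^ 2 * K₃ ^ 2) = 2 * σ')
    ∧ ((j₁ * K₁ ^ 2 + j₂ * j₃ * δ₁ ^ 2 * K₁ ^ 2)
        + (j₂ * K₂ ^ 2 + j₃ * j₁ * δ₂ ^ 2 * K₂ ^ 2)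
        + (j₃ * K₃ ^ 2 + j₁ * j₂ * δ₃ ^ 2 * K₃ ^ 2) = σ' ^ 2)
    ∧ (2 * σ') ^ 2 - 4 * σ' ^ 2 = 0 := by
  have hd := mul_prod_eq_one_of_prod_sub_eq_sq hσ hj₁ hj₂ hj₃ hσsq
  refine ⟨?_, ?_, by ring⟩
  · rw [clebschC₃_eq_of_invariant K₁ K₂ K₃ hj₁ hj₂ hj₃, hC₁, hC₂, hd]
    ring
  · rw [clebschC₄_eq_of_invariant K₁ K₂ K₃ hj₁ hj₂ hj₃, hC₁, hC₂, hd]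
    ring

/-- On the invariant subspaces `p_α = δ_α K_α` with `j_α = σδ_α + σ′` and
`(j₁−σ′)(j₂−σ′)(j₃−σ′) = σ²`, the conditions `C₁ = 0` and `C₂ = 1` force
`C₃ = 2σ′` and `C₄ = (σ′)²`; in particular `C₃² − 4C₄ = 0`, so `x² − C₃x + C₄ = 0`
has a double root (`j₄ = j₅`). -/
theorem special_solution_double_root (σ σ' δ₁ δ₂ δ₃ j₁ j₂ j₃ K₁ K₂ K₃ p₁ p₂ p₃ : ℝ)
    (hσ : σ ≠ 0)
    (hj₁ : j₁ = σ * δ₁ + σ') (hj₂ : j₂ = σ * δ₂ + σ') (hj₃ : j₃ = σ * δ₃ + σ')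
    (hσsq : (j₁ - σ') * (j₂ - σ') * (j₃ - σ') = σ ^ 2)
    (hj₁0 : j₁ ≠ 0) (hj₂0 : j₂ ≠ 0) (hj₃0 : j₃ ≠ 0)
    (hp₁ : p₁ = δ₁ * K₁) (hp₂ : p₂ = δ₂ * K₂) (hp₃ : p₃ = δ₃ * K₃)
    (hC₁ : δ₁ * K₁ ^ 2 + δ₂ * K₂ ^ 2 + δ₃ * K₃ ^ 2 = 0)
    (hC₂ : δ₁ ^ 2 * K₁ ^ 2 + δ₂ ^ 2 * K₂ ^ 2 + δ₃ ^ 2 * K₃ ^ 2 = 1) :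
    ((K₁ ^ 2 + (j₂ + j₃) * δ₁ ^ 2 * K₁ ^ 2)
        + (K₂ ^ 2 + (j₃ + j₁) * δ₂ ^ 2 * K₂ ^ 2)
        + (K₃ ^ 2 + (j₁ + j₂) * δ₃ ^ 2 * K₃ ^ 2) = 2 * σ')
    ∧ ((j₁ * K₁ ^ 2 + j₂ * j₃ * δ₁ ^ 2 * K₁ ^ 2)
        + (j₂ * K₂ ^ 2 + j₃ * j₁ * δ₂ ^ 2 * K₂ ^ 2)
        + (j₃ * K₃ ^ 2 + j₁ * j₂ * δ₃ ^ 2 * K₃ ^ 2) = σ' ^ 2)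
    ∧ (2 * σ') ^ 2 - 4 * σ' ^ 2 = 0 :=
  special_solution_double_root_general σ σ' δ₁ δ₂ δ₃ j₁ j₂ j₃ K₁ K₂ K₃ hσ hj₁ hj₂ hj₃ hσsq hC₁ hC₂
end
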